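/- For nonnegative integers n_i, n_j, n_k with n = n_i + n_j + n_k, n_i, n_j, n_k ≥ 1, the sum Σ_{m=1}^{n} (n_i/n)·[C(n_j+n_k, m)/C(n-1, m)]·[ ((n_j)_2/(n_j+n_k)_2)·(m-1)/(m+1) + (2n_j/(n_j+n_k))·1/(m+1) ] minus Σ_{m=1}^{n} (n_i/n)·C(n_j, m)/C(n-1, m) equals (n_j)_2/(n(n_j+n_k-1)) - n_i n_j/(n(n_i+n_k)) - 2 n_i n_j n_k/(n·(n_j+n_k)_2) + 2 n_i n_j n_k/((n_j+n_k+1)_3)·(H_n - H_{n_i - 1}). -/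

import Mathlib

/-!
Write `ni = i + 1`. Splitting `(m - 1)/(m + 1) = 1 - 2/(m + 1)`, both sums become combinations of
`∑_{m ≤ b} C(b,m)/C(b+c,m) = (b+c+1)/(c+1)` and
`∑_{m ≤ b} C(b,m)/(C(b+c,m)(m+1)) = ((b+c+1)/(b+1))(H_{b+c+1} - H_c)`.
The first is the hockey-stick identity once `C(b,m)/C(b+c,m) = C(b-m+c,c)/C(b+c,c)`; the second
follows by induction on `c` from `1/C(a+1,m) = (a+1-m)/((a+1) C(a,m))`, which relates the
`c + 1` sum to the `c` sums of both kinds. What remains is field arithmetic.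
-/

/-- The `k`-th harmonic number `1 + 1/2 + ⋯ + 1/k`, with `H 0 = 0`. -/
def H (k : ℕ) : ℚ := ∑ i ∈ Finset.range k, (1 : ℚ) / (i + 1)

open Finset

theorem sum_Icc_one_eq_sum_range_sub {M : Type*} [AddCommGroup M] {b N : ℕ} (f : ℕ → M)
    (hbN : b ≤ N) (hf : ∀ m, b < m → f m = 0) :
    ∑ m ∈ Icc 1 N, f m = ∑ m ∈ range (b + 1), f m - f 0 := by
  have hext : ∑ m ∈ range (b + 1), f m = ∑ m ∈ range (N + 1), f m :=
    sum_subset (range_subset_range.2 (by omega)) fun m hm hm' => hf m (by simp at hm hm'; omega)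
  rw [hext, range_eq_Ico, sum_eq_sum_Ico_succ_bot (by omega), Ico_add_one_right_eq_Icc,
    add_sub_cancel_left]

section ChooseRatio

variable {K : Type*} [Field K] [CharZero K]

theorem Nat.choose_mul_add_choose {b m : ℕ} (c : ℕ) (hm : m ≤ b) :
    b.choose m * (b + c).choose c = (b + c).choose m * (b - m + c).choose c := by
  rw [← Nat.choose_symm_add, mul_comm, Nat.choose_mul hm, ← Nat.choose_symm_add,
    show b + c - m = b - m + c by omega]

theorem cast_choose_div_cast_choose_add {b m : ℕ} (c : ℕ) (hm : m ≤ b) :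
    (b.choose m : K) / (b + c).choose m = (b - m + c).choose c / (b + c).choose c := by
  have hm' : m ≤ b + c := hm.trans (Nat.le_add_right b c)
  rw [div_eq_div_iff (by exact_mod_cast (Nat.choose_pos hm').ne')
    (by exact_mod_cast (Nat.choose_pos (Nat.le_add_left c b)).ne'),
    mul_comm ((b - m + c).choose c : K)]
  exact_mod_cast Nat.choose_mul_add_choose c hm

theorem sum_range_cast_choose_div_cast_choose_add (b c : ℕ) :
    ∑ m ∈ range (b + 1), (b.choose m : K) / (b + c).choose m = (b + c + 1) / (c + 1) := by
  have hockey :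
      ∑ m ∈ range (b + 1), ((b - m + c).choose c : K) = (b + c + 1).choose (c + 1) := by
    rw [← sum_range_reflect, ← Nat.sum_range_add_choose]
    push_cast
    refine sum_congr rfl fun m hm => ?_
    rw [mem_range] at hm
    congr 3
    omega
  have hc : ((b + c).choose c : K) ≠ 0 := by
    exact_mod_cast (Nat.choose_pos (Nat.le_add_left c b)).ne'
  rw [sum_congr rfl fun m hm =>
      cast_choose_div_cast_choose_add c (Nat.lt_succ_iff.mp (mem_range.mp hm)),
    ← sum_div, hockey, div_eq_div_iff hc (Nat.cast_add_one_ne_zero c)]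
  exact_mod_cast (Nat.add_one_mul_choose_eq (b + c) c).symm

theorem inv_cast_choose_succ {a m : ℕ} (hm : m ≤ a) :
    (((a + 1).choose m : K))⁻¹ = (a + 1 - m) / ((a + 1) * a.choose m) := by
  have h := congrArg (Nat.cast : ℕ → K) (Nat.choose_mul_succ_eq a m)
  push_cast [Nat.cast_sub (hm.trans a.le_succ)] at h
  have ha : (a.choose m : K) ≠ 0 := by exact_mod_cast (Nat.choose_pos hm).ne'
  have ha' : ((a + 1).choose m : K) ≠ 0 := by
    exact_mod_cast (Nat.choose_pos (hm.trans a.le_succ)).ne'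
  field_simp
  linear_combination h

theorem sum_Icc_cast_choose_div_cast_choose_add {b N : ℕ} (c : ℕ) (hbN : b ≤ N) :
    ∑ m ∈ Icc 1 N, (b.choose m : K) / (b + c).choose m = b / (c + 1) := by
  rw [sum_Icc_one_eq_sum_range_sub _ hbN fun m hm => by simp [Nat.choose_eq_zero_of_lt hm],
    sum_range_cast_choose_div_cast_choose_add]
  have : (c + 1 : K) ≠ 0 := Nat.cast_add_one_ne_zero c
  field_simp
  simp

end ChooseRatio

theorem H_succ (k : ℕ) : H (k + 1) = H k + 1 / (k + 1) := by
  simp [H, sum_range_succ]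

theorem sum_range_cast_choose_div_cast_choose_add_div_succ (b c : ℕ) :
    ∑ m ∈ range (b + 1), (b.choose m : ℚ) / (b + c).choose m / (m + 1) =
      (b + c + 1) / (b + 1) * (H (b + c + 1) - H c) := by
  induction c with
  | zero =>
    have hterm : ∀ m ∈ range (b + 1),
        (b.choose m : ℚ) / (b + 0).choose m / (m + 1) = 1 / (m + 1) := fun m hm => by
      rw [add_zero, div_self]
      exact_mod_cast (Nat.choose_pos (Nat.lt_succ_iff.mp (mem_range.mp hm))).ne'
    rw [sum_congr rfl hterm, Nat.cast_zero, add_zero, add_zero, div_self (Nat.cast_add_one_ne_zero b), one_mul]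
    simp [H]
  | succ c ih =>
    have hterm : ∀ m ∈ range (b + 1), (b.choose m : ℚ) / (b + (c + 1)).choose m / (m + 1) =
        (b + c + 2) / (b + c + 1) * ((b.choose m : ℚ) / (b + c).choose m / (m + 1)) -
          1 / (b + c + 1) * ((b.choose m : ℚ) / (b + c).choose m) := fun m hm => by
      have hm : m ≤ b + c := (Nat.lt_succ_iff.mp (mem_range.mp hm)).trans (Nat.le_add_right b c)
      rw [← add_assoc, div_eq_mul_inv (b.choose m : ℚ), inv_cast_choose_succ hm]
      push_cast
      have : ((b + c).choose m : ℚ) ≠ 0 := by exact_mod_cast (Nat.choose_pos hm).ne'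
      field_simp
      ring
    rw [sum_congr rfl hterm, sum_sub_distrib, ← mul_sum, ← mul_sum, ih,
      sum_range_cast_choose_div_cast_choose_add, show b + (c + 1) + 1 = b + c + 1 + 1 from rfl,
      H_succ (b + c + 1), H_succ c]
    push_cast
    field_simp
    ring

theorem sum_Icc_cast_choose_div_cast_choose_add_div_succ {b N : ℕ} (c : ℕ) (hbN : b ≤ N) :
    ∑ m ∈ Icc 1 N, (b.choose m : ℚ) / (b + c).choose m / (m + 1) =
      (b + c + 1) / (b + 1) * (H (b + c + 1) - H c) - 1 := by
  rw [sum_Icc_one_eq_sum_range_sub _ hbN fun m hm => by simp [Nat.choose_eq_zero_of_lt hm],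
    sum_range_cast_choose_div_cast_choose_add_div_succ]
  simp

/-- Closed form for the coefficient `α(n, i, j, k)` of the three-allele sampling formula. -/
theorem stmt16 (ni nj nk : ℕ) (hi : 1 ≤ ni) (hj : 1 ≤ nj) (hk : 1 ≤ nk) :
    (∑ m ∈ Finset.Icc 1 (ni + nj + nk),
        ((ni : ℚ) / ((ni : ℚ) + nj + nk)) *
          ((Nat.choose (nj + nk) m : ℚ) / (Nat.choose (ni + nj + nk - 1) m : ℚ)) *
          (((Nat.descFactorial nj 2 : ℚ) / (Nat.descFactorial (nj + nk) 2 : ℚ)) *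
              (((m : ℚ) - 1) / ((m : ℚ) + 1)) +
            (2 * (nj : ℚ) / ((nj : ℚ) + nk)) * (1 / ((m : ℚ) + 1)))) -
      (∑ m ∈ Finset.Icc 1 (ni + nj + nk),
        ((ni : ℚ) / ((ni : ℚ) + nj + nk)) *
          ((Nat.choose nj m : ℚ) / (Nat.choose (ni + nj + nk - 1) m : ℚ))) =
    (Nat.descFactorial nj 2 : ℚ) / (((ni : ℚ) + nj + nk) * ((nj : ℚ) + nk - 1)) -
      (ni : ℚ) * nj / (((ni : ℚ) + nj + nk) * ((ni : ℚ) + nk)) -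
      2 * (ni : ℚ) * nj * nk /
        (((ni : ℚ) + nj + nk) * (Nat.descFactorial (nj + nk) 2 : ℚ)) +
      2 * (ni : ℚ) * nj * nk / (Nat.descFactorial (nj + nk + 1) 3 : ℚ) *
        (H (ni + nj + nk) - H (ni - 1)) := by
  obtain ⟨i, rfl⟩ : ∃ i, ni = i + 1 := ⟨ni - 1, by omega⟩
  set N := i + 1 + nj + nk
  have hA₀ :
      ∑ m ∈ Icc 1 N, ((nj + nk).choose m : ℚ) / (N - 1).choose m = (nj + nk) / (i + 1) := by
    rw [show N - 1 = nj + nk + i by omega, sum_Icc_cast_choose_div_cast_choose_add i (by omega)]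
    push_cast
    ring
  have hA₁ : ∑ m ∈ Icc 1 N, ((nj + nk).choose m : ℚ) / (N - 1).choose m / (m + 1) =
      (nj + nk + i + 1) / (nj + nk + 1) * (H N - H i) - 1 := by
    rw [show N - 1 = nj + nk + i by omega,
      sum_Icc_cast_choose_div_cast_choose_add_div_succ i (by omega),
      show nj + nk + i + 1 = N by omega]
    push_cast
    ring
  have hB : ∑ m ∈ Icc 1 N, (nj.choose m : ℚ) / (N - 1).choose m = nj / (nk + i + 1) := by
    rw [show N - 1 = nj + (nk + i) by omega,
      sum_Icc_cast_choose_div_cast_choose_add (nk + i) (by omega)]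
    push_cast
    ring
  have hterm : ∀ (m : ℕ) (P q r R : ℚ),
      P * R * (q * ((m - 1) / (m + 1)) + r * (1 / (m + 1))) =
        P * q * R + P * (r - 2 * q) * (R / (m + 1)) := fun m P q r R => by
    field_simp
    ring
  have e₃ :
      ((nj + nk + 1).descFactorial 3 : ℚ) = (nj + nk + 1) * ((nj + nk) * (nj + nk - 1)) := by
    rw [Nat.succ_descFactorial_succ, Nat.cast_mul, Nat.cast_descFactorial_two]
    push_cast
    ring
  simp only [hterm, sum_add_distrib, ← mul_sum, hA₀, hA₁, hB, e₃,
    Nat.cast_descFactorial_two]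
  push_cast
  have hj' : (1 : ℚ) ≤ nj := by exact_mod_cast hj
  have hk' : (1 : ℚ) ≤ nk := by exact_mod_cast hk
  have : (nj + nk : ℚ) ≠ 0 := by linarith
  have : (nj + nk - 1 : ℚ) ≠ 0 := by linarith
  field_simp
  ring
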